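/- There is a constant C > 0 such that for all real x ≥ 1, |S(x) − 2·M(x)| ≤ C·x^{1/2}, where M(x) = Σ_{m ∈ ℕ, m ≤ √x} r₂(m)·(x − m²)^{1/2}. -/

import Mathlib

open Real

/-- `r₂(m)`: the number of representations of `m` as a sum of two squares of integers. -/
noncomputable def r2 (m : ℕ) : ℕ :=
  Set.ncard {p : ℤ × ℤ | p.1 ^ 2 + p.2 ^ 2 = (m : ℤ)}

/-- `S(x)`: the number of integer points `(a,b,w)` with `(a²+b²)² + w² < x`. -/
noncomputable def S (x : ℝ) : ℕ :=
  Set.ncard {p : ℤ × ℤ × ℤ |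
    (((p.1 : ℝ) ^ 2 + (p.2.1 : ℝ) ^ 2) ^ 2 + (p.2.2 : ℝ) ^ 2) < x}

/-- `M(x) = Σ_{m ∈ ℕ, m ≤ √x} r₂(m)·(x − m²)^{1/2}`. -/
noncomputable def M (x : ℝ) : ℝ :=
  ∑ m ∈ Finset.range (⌊Real.sqrt x⌋₊ + 1),
    (r2 m : ℝ) * (x - (m : ℝ) ^ 2) ^ ((1 : ℝ) / 2)

/-! Grouping the points `(a, b, w)` by `m = a² + b²` gives
`S x = ∑_{m ≤ √x} r₂(m) · #{w : w² < x - m²}`, and `#{w ∈ ℤ : w² < t} = 2⌈√t⌉ - 1` is within `1`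
of `2√t`. Hence `|S x - 2 M x| ≤ ∑_{m ≤ √x} r₂(m)`, the number of lattice points in a disc of
radius about `x^{1/4}`, which is `O(√x)`. -/

open Finset

noncomputable def sqLt (t : ℝ) : Finset ℤ :=
  Ioo (-⌈√t⌉) ⌈√t⌉

theorem mem_sqLt {t : ℝ} {w : ℤ} : w ∈ sqLt t ↔ (w : ℝ) ^ 2 < t := by
  rw [sqLt, mem_Ioo, ← abs_lt, Int.lt_ceil, Int.cast_abs, Real.lt_sqrt (abs_nonneg _), sq_abs]

theorem abs_card_sqLt_sub_le (t : ℝ) : |(#(sqLt t) : ℝ) - 2 * √t| ≤ 1 := by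
  have hle := Int.le_ceil √t
  have hlt := Int.ceil_lt_add_one √t
  rw [sqLt, Int.card_Ioo]
  rcases le_or_gt ⌈√t⌉ 0 with hc | hc
  · have hc' : ((⌈√t⌉ : ℤ) : ℝ) ≤ 0 := by exact_mod_cast hc
    have h0 : √t = 0 := le_antisymm (hle.trans hc') (Real.sqrt_nonneg t)
    rw [Int.toNat_of_nonpos (by omega), h0]
    norm_num
  · have hcard : ((⌈√t⌉ - -⌈√t⌉ - 1).toNat : ℝ) = 2 * (⌈√t⌉ : ℝ) - 1 := by
      rw [← Int.cast_natCast, Int.toNat_of_nonneg (by omega)]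
      push_cast
      ring
    rw [hcard, abs_le]
    constructor <;> linarith

theorem card_sqLt_le (t : ℝ) : (#(sqLt t) : ℝ) ≤ 2 * √t + 1 := by
  linarith [(abs_le.1 (abs_card_sqLt_sub_le t)).2]

noncomputable def sqSumReps (m : ℕ) : Finset (ℤ × ℤ) :=
  (sqLt (m + 1) ×ˢ sqLt (m + 1)).filter fun p => p.1 ^ 2 + p.2 ^ 2 = (m : ℤ)

theorem mem_sqSumReps {m : ℕ} {p : ℤ × ℤ} : p ∈ sqSumReps m ↔ p.1 ^ 2 + p.2 ^ 2 = (m : ℤ) := by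
  rw [sqSumReps, mem_filter, mem_product, mem_sqLt, mem_sqLt, and_iff_right_iff_imp]
  intro h
  have h' : (p.1 : ℝ) ^ 2 + (p.2 : ℝ) ^ 2 = m := by exact_mod_cast h
  constructor <;> nlinarith [sq_nonneg (p.1 : ℝ), sq_nonneg (p.2 : ℝ)]

theorem r2_eq_card_sqSumReps (m : ℕ) : r2 m = #(sqSumReps m) := by
  rw [r2, ← Set.ncard_coe_finset]
  congr 1
  ext p
  simp [mem_sqSumReps]

theorem pairwiseDisjoint_sqSumReps (s : Set ℕ) : s.PairwiseDisjoint sqSumReps := by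
  intro m _ n _ hmn
  refine Finset.disjoint_left.2 fun p hm hn => hmn ?_
  rw [mem_sqSumReps] at hm hn
  omega

theorem sum_range_r2_le (n : ℕ) : ∑ m ∈ range n, (r2 m : ℝ) ≤ (2 * √n + 1) ^ 2 := by
  have hsub : (range n).biUnion sqSumReps ⊆ sqLt n ×ˢ sqLt n := by
    intro p hp
    obtain ⟨m, hm, hp⟩ := mem_biUnion.1 hp
    rw [mem_range] at hm
    rw [mem_sqSumReps] at hp
    have hp' : (p.1 : ℝ) ^ 2 + (p.2 : ℝ) ^ 2 = m := by exact_mod_cast hp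
    have hmn : (m : ℝ) + 1 ≤ n := by exact_mod_cast hm
    rw [mem_product, mem_sqLt, mem_sqLt]
    constructor <;> nlinarith [sq_nonneg (p.1 : ℝ), sq_nonneg (p.2 : ℝ)]
  have hcard : ∑ m ∈ range n, r2 m ≤ #(sqLt n) * #(sqLt n) := by
    simp_rw [r2_eq_card_sqSumReps]
    rw [← card_biUnion (pairwiseDisjoint_sqSumReps _), ← card_product]
    exact card_le_card hsub
  calc ∑ m ∈ range n, (r2 m : ℝ) ≤ (#(sqLt n) : ℝ) ^ 2 := by
        rw [sq]; exact_mod_cast hcard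
    _ ≤ (2 * √n + 1) ^ 2 := by
        gcongr
        exact card_sqLt_le n

theorem S_eq_sum (x : ℝ) :
    S x = ∑ m ∈ range (⌊√x⌋₊ + 1), r2 m * #(sqLt (x - (m : ℝ) ^ 2)) := by
  let T : ℕ → Finset (ℤ × ℤ × ℤ) := fun m =>
    (sqSumReps m ×ˢ sqLt (x - (m : ℝ) ^ 2)).map (Equiv.prodAssoc ℤ ℤ ℤ).toEmbedding
  have hT : (range (⌊√x⌋₊ + 1) : Set ℕ).PairwiseDisjoint T := by
    intro m hm n hn hmn
    simpa [T, disjoint_map, disjoint_product] using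
      Or.inl (pairwiseDisjoint_sqSumReps _ hm hn hmn)
  have hS : S x = #((range (⌊√x⌋₊ + 1)).biUnion T) := by
    rw [S, ← Set.ncard_coe_finset]
    congr 1
    ext ⟨a, b, w⟩
    simp only [Set.mem_ofPred_eq, coe_biUnion, coe_range, Set.mem_iUnion, Set.mem_Iio,
      mem_coe, T, mem_map_equiv, Equiv.prodAssoc_symm_apply, mem_product, mem_sqSumReps,
      mem_sqLt]
    constructor
    · intro h
      obtain ⟨m, hm⟩ := Int.eq_ofNat_of_zero_le (by positivity : 0 ≤ a ^ 2 + b ^ 2)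
      have hm' : (a : ℝ) ^ 2 + (b : ℝ) ^ 2 = m := by exact_mod_cast hm
      refine ⟨m, Nat.lt_succ_of_le (Nat.le_floor ?_), hm, by rw [← hm']; linarith⟩
      exact Real.le_sqrt_of_sq_le (by rw [← hm']; nlinarith [sq_nonneg (w : ℝ)])
    · rintro ⟨m, -, hm, hw⟩
      have hm' : (a : ℝ) ^ 2 + (b : ℝ) ^ 2 = m := by exact_mod_cast hm
      rw [hm']
      linarith
  rw [hS, card_biUnion hT]
  simp [T, r2_eq_card_sqSumReps]

/-- There is `C > 0` such that `|S(x) − 2·M(x)| ≤ C·x^{1/2}` for all `x ≥ 1`. -/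
theorem S_approx_two_M :
    ∃ C : ℝ, 0 < C ∧ ∀ x : ℝ, 1 ≤ x →
      |(S x : ℝ) - 2 * M x| ≤ C * x ^ ((1 : ℝ) / 2) := by
  refine ⟨18, by norm_num, fun x hx => ?_⟩
  set N := ⌊√x⌋₊
  have hM : M x = ∑ m ∈ range (N + 1), (r2 m : ℝ) * √(x - (m : ℝ) ^ 2) := by
    rw [M]
    exact sum_congr rfl fun m _ => by rw [Real.sqrt_eq_rpow]
  have hN : (N : ℝ) + 1 ≤ 2 * √x := by
    linarith [Nat.floor_le (Real.sqrt_nonneg x), Real.one_le_sqrt.2 hx]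
  rw [← Real.sqrt_eq_rpow]
  calc |(S x : ℝ) - 2 * M x|
      = |∑ m ∈ range (N + 1),
          (r2 m : ℝ) * (#(sqLt (x - (m : ℝ) ^ 2)) - 2 * √(x - (m : ℝ) ^ 2))| := by
        rw [S_eq_sum, hM, mul_sum]
        push_cast
        rw [← sum_sub_distrib]
        exact congrArg abs (sum_congr rfl fun m _ => by ring)
    _ ≤ ∑ m ∈ range (N + 1), (r2 m : ℝ) := by
        refine (abs_sum_le_sum_abs _ _).trans (sum_le_sum fun m _ => ?_)
        rw [abs_mul, Nat.abs_cast]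
        exact mul_le_of_le_one_right (Nat.cast_nonneg _) (abs_card_sqLt_sub_le _)
    _ ≤ (2 * √(N + 1 : ℕ) + 1) ^ 2 := sum_range_r2_le _
    _ ≤ 9 * (N + 1) := by
        have h1 : 1 ≤ √((N + 1 : ℕ) : ℝ) := Real.one_le_sqrt.2 (by simp)
        have h2 := Real.sq_sqrt (Nat.cast_nonneg (α := ℝ) (N + 1))
        push_cast at h1 h2 ⊢
        nlinarith
    _ ≤ 18 * √x := by linarith
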